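/- Let G be a connected Eulerian digraph and x a chip-distribution on G. Then x is non-terminating if and only if there exists a recurrent chip-distribution y with x ~ y. -/

import Mathlib

namespace ChipFiring

variable {V : Type*}

/-- Out-degree of a vertex: total multiplicity of edges leaving `v`. -/
def outdeg [Fintype V] (d : V → V → ℕ) (v : V) : ℕ := ∑ u, d v u

/-- In-degree of a vertex: total multiplicity of edges entering `v`. -/
def indeg [Fintype V] (d : V → V → ℕ) (v : V) : ℕ := ∑ u, d u v

/-- A digraph (multiplicity function) has no loops. -/
def Loopless (d : V → V → ℕ) : Prop := ∀ v, d v v = 0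

/-- Weak connectivity: each pair of vertices is joined by an undirected walk. -/
def WeaklyConnected (d : V → V → ℕ) : Prop :=
  ∀ u v : V, Relation.ReflTransGen (fun a b => d a b ≠ 0 ∨ d b a ≠ 0) u v

/-- Strong connectivity: each ordered pair of vertices is joined by a directed walk. -/
def StronglyConnected (d : V → V → ℕ) : Prop :=
  ∀ u v : V, Relation.ReflTransGen (fun a b => d a b ≠ 0) u v

/-- Eulerian: out-degree equals in-degree at each vertex. -/
def Eulerian [Fintype V] (d : V → V → ℕ) : Prop := ∀ v, outdeg d v = indeg d v

/-- The Laplacian matrix: `L(u,u) = -d⁺(u)`, and `L(u,v) = d(v,u)` for `u ≠ v`. -/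
def laplacian [Fintype V] [DecidableEq V] (d : V → V → ℕ) : Matrix V V ℤ :=
  fun u v => if u = v then -(outdeg d v : ℤ) else (d v u : ℤ)

/-- Firing vertex `v`: `v` sends one chip along each outgoing edge. -/
def fire [Fintype V] [DecidableEq V] (d : V → V → ℕ) (x : V → ℕ) (v : V) : V → ℕ :=
  fun u => if u = v then x v - outdeg d v else x u + d v u

/-- `LegalSeq d x α` : the sequence of firings `α` is legal from initial distribution `x`. -/
def LegalSeq [Fintype V] [DecidableEq V] (d : V → V → ℕ) : (V → ℕ) → List V → Prop
  | _, [] => True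
  | x, v :: rest => outdeg d v ≤ x v ∧ LegalSeq d (fire d x v) rest

/-- The chip-distribution obtained from `x` after performing the firings `α`. -/
def runGame [Fintype V] [DecidableEq V] (d : V → V → ℕ) : (V → ℕ) → List V → (V → ℕ)
  | x, [] => x
  | x, v :: rest => runGame d (fire d x v) rest

/-- The firing vector of a game: how many times each vertex is fired. -/
def firingVector [DecidableEq V] (α : List V) : V → ℕ := fun v => α.count v

/-- `x ⤳ y` : some legal game transforms `x` into `y`. -/
def Reaches [Fintype V] [DecidableEq V] (d : V → V → ℕ) (x y : V → ℕ) : Prop :=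
  ∃ α : List V, LegalSeq d x α ∧ runGame d x α = y

/-- A period vector: a nonnegative integer vector in the kernel of the Laplacian. -/
def PeriodVector [Fintype V] [DecidableEq V] (d : V → V → ℕ) (p : V → ℕ) : Prop :=
  (laplacian d).mulVec (fun v => (p v : ℤ)) = 0

/-- A vector `f ∈ ℕ^V` is reduced if `f ≥ p` fails for every nonzero period vector `p`. -/
def Reduced [Fintype V] [DecidableEq V] (d : V → V → ℕ) (f : V → ℕ) : Prop :=
  ∀ p : V → ℕ, PeriodVector d p → p ≠ 0 → ¬ (∀ v, p v ≤ f v)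

/-- A distribution is recurrent if a nonempty legal game transforms it back to itself. -/
def Recurrent [Fintype V] [DecidableEq V] (d : V → V → ℕ) (x : V → ℕ) : Prop :=
  ∃ α : List V, α ≠ [] ∧ LegalSeq d x α ∧ runGame d x α = x

/-- Linear equivalence: `x = y + Lz` for some integer vector `z`. -/
def LinEquiv [Fintype V] [DecidableEq V] (d : V → V → ℕ) (x y : V → ℕ) : Prop :=
  ∃ z : V → ℤ, ∀ v, (x v : ℤ) = (y v : ℤ) + (laplacian d).mulVec z v

/-- `x` is non-terminating: there is an infinite sequence of legal firings from `x`. -/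
def NonTerminating [Fintype V] [DecidableEq V] (d : V → V → ℕ) (x : V → ℕ) : Prop :=
  ∃ s : ℕ → V, ∀ n : ℕ, LegalSeq d x (List.ofFn (fun i : Fin n => s i))

end ChipFiring

/-!
A non-terminating game from `x` only visits distributions with at most `∑ x` chips, so it revisits
one; that distribution is recurrent and reachable from, hence linearly equivalent to, `x`.
Conversely, the firing vector `f` of a cycle of a recurrent `y` is a period vector, which on a
connected Eulerian digraph has full support. If a distribution `c ~ y` reachable from `x` were
stable, adding multiples of `f` would write `c = y + L w` with `w ≥ 0`; by the least action
principle no legal game from `y` fires a vertex more than `w` times, yet repeating the cycle of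
`y` does.
-/

namespace ChipFiring

open Matrix

section

variable {V : Type*} [DecidableEq V]

lemma firingVector_concat (α : List V) (a v : V) :
    firingVector (α ++ [a]) v = firingVector α v + if v = a then 1 else 0 := by
  by_cases h : v = a
  · simp [firingVector, h]
  · simp [firingVector, h, Ne.symm h]

lemma firingVector_ne_zero {α : List V} (hα : α ≠ []) : firingVector α ≠ 0 := by
  obtain ⟨a, α, rfl⟩ := List.exists_cons_of_ne_nil hα
  exact Function.ne_iff.2 ⟨a, by simp [firingVector]⟩

lemma firingVector_flatten_replicate (n : ℕ) (α : List V) (v : V) :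
    firingVector (List.replicate n α).flatten v = n * firingVector α v := by
  simp [firingVector, List.count_flatten, List.sum_replicate]

end

section

variable {V : Type*} [Fintype V] [DecidableEq V] {d : V → V → ℕ}

lemma legalSeq_append {α β : List V} {x : V → ℕ} :
    LegalSeq d x (α ++ β) ↔ LegalSeq d x α ∧ LegalSeq d (runGame d x α) β := by
  induction α generalizing x with
  | nil => simp [LegalSeq, runGame]
  | cons v α ih => simp only [List.cons_append, LegalSeq, runGame, ih, and_assoc]

lemma runGame_append (α β : List V) (x : V → ℕ) :
    runGame d x (α ++ β) = runGame d (runGame d x α) β := by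
  induction α generalizing x with
  | nil => rfl
  | cons v α ih => exact ih _

lemma legalSeq_concat {α : List V} {v : V} {x : V → ℕ} :
    LegalSeq d x (α ++ [v]) ↔ LegalSeq d x α ∧ outdeg d v ≤ runGame d x α v := by
  simp [legalSeq_append, LegalSeq]

lemma runGame_concat (α : List V) (v : V) (x : V → ℕ) :
    runGame d x (α ++ [v]) = fire d (runGame d x α) v :=
  runGame_append α [v] x

lemma fire_cast {x : V → ℕ} {a : V} (ha : outdeg d a ≤ x a) (v : V) :
    (fire d x a v : ℤ) = x v + laplacian d v a := by
  unfold fire laplacian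
  split_ifs with hv
  · subst hv; push_cast [ha]; ring
  · push_cast; rfl

lemma runGame_cast {α : List V} {x : V → ℕ} (hα : LegalSeq d x α) (v : V) :
    (runGame d x α v : ℤ) = x v + (laplacian d *ᵥ fun u => (firingVector α u : ℤ)) v := by
  induction α using List.reverseRecOn with
  | nil => simp [runGame, firingVector, mulVec, dotProduct]
  | append_singleton α a ih =>
    obtain ⟨hρ, ha⟩ := legalSeq_concat.1 hα
    have hcount : (fun u => (firingVector (α ++ [a]) u : ℤ))
        = (fun u => (firingVector α u : ℤ)) + Pi.single a 1 := by
      ext u; simp [firingVector_concat, Pi.single_apply]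
    rw [runGame_concat, fire_cast ha, ih hρ, hcount, mulVec_add, mulVec_single_one]
    simp only [Pi.add_apply, col_apply]
    ring

lemma sum_laplacian_apply_left (a : V) : ∑ v, laplacian d v a = -(d a a : ℤ) := by
  have h : ∀ v, laplacian d v a = d a v - if v = a then (outdeg d a + d a a : ℤ) else 0 := by
    intro v
    unfold laplacian
    split_ifs with hv
    · subst hv; ring
    · ring
  simp only [h, Finset.sum_sub_distrib, Finset.sum_ite_eq', Finset.mem_univ, if_true, outdeg]
  push_cast
  ring

lemma sum_fire_le {x : V → ℕ} {a : V} (ha : outdeg d a ≤ x a) :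
    ∑ v, fire d x a v ≤ ∑ v, x v := by
  have : (∑ v, fire d x a v : ℤ) = ∑ v, (x v : ℤ) - d a a := by
    simp only [fire_cast ha, Finset.sum_add_distrib, sum_laplacian_apply_left]
    ring
  have : (∑ v, fire d x a v : ℤ) ≤ ∑ v, (x v : ℤ) := by rw [this]; simp
  exact_mod_cast this

lemma sum_runGame_le {α : List V} {x : V → ℕ} (hα : LegalSeq d x α) :
    ∑ v, runGame d x α v ≤ ∑ v, x v := by
  induction α generalizing x with
  | nil => rfl
  | cons a α ih => exact (ih hα.2).trans (sum_fire_le hα.1)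

lemma runGame_le_sum {α : List V} {x : V → ℕ} (hα : LegalSeq d x α) (v : V) :
    runGame d x α v ≤ ∑ u, x u :=
  (Finset.single_le_sum (fun _ _ => Nat.zero_le _) (Finset.mem_univ v)).trans
    (sum_runGame_le hα)

lemma Reaches.refl (x : V → ℕ) : Reaches d x x := ⟨[], trivial, rfl⟩

lemma Reaches.fire {x c : V → ℕ} {v : V} (h : Reaches d x c) (hv : outdeg d v ≤ c v) :
    Reaches d x (fire d c v) := by
  obtain ⟨α, hα, rfl⟩ := h
  exact ⟨α ++ [v], legalSeq_concat.2 ⟨hα, hv⟩, runGame_concat α v x⟩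

lemma Reaches.linEquiv {x y : V → ℕ} (h : Reaches d x y) : LinEquiv d y x := by
  obtain ⟨α, hα, rfl⟩ := h
  exact ⟨_, runGame_cast hα⟩

lemma LinEquiv.symm {x y : V → ℕ} (h : LinEquiv d x y) : LinEquiv d y x := by
  obtain ⟨z, hz⟩ := h
  refine ⟨-z, fun v => ?_⟩
  rw [mulVec_neg, Pi.neg_apply, hz v]
  ring

lemma LinEquiv.trans {x y c : V → ℕ} (hxy : LinEquiv d x y) (hyc : LinEquiv d y c) :
    LinEquiv d x c := by
  obtain ⟨z, hz⟩ := hxy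
  obtain ⟨z', hz'⟩ := hyc
  refine ⟨z' + z, fun v => ?_⟩
  rw [mulVec_add, Pi.add_apply, hz v, hz' v]
  ring

lemma periodVector_firingVector {y : V → ℕ} {β : List V} (hβ : LegalSeq d y β)
    (hrun : runGame d y β = y) : PeriodVector d (firingVector β) := by
  ext v
  have := runGame_cast hβ v
  rw [hrun] at this
  simpa using this.symm

lemma legalSeq_flatten_replicate {y : V → ℕ} {β : List V} (hβ : LegalSeq d y β)
    (hrun : runGame d y β = y) (n : ℕ) :
    LegalSeq d y (List.replicate n β).flatten ∧ runGame d y (List.replicate n β).flatten = y := by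
  induction n with
  | zero => exact ⟨trivial, rfl⟩
  | succ n ih =>
    rw [List.replicate_succ, List.flatten_cons, legalSeq_append, runGame_append, hrun]
    exact ⟨⟨hβ, ih.1⟩, ih.2⟩

lemma laplacian_mul_nonneg {g : V → ℤ} (hg : 0 ≤ g) {v : V} (hv : g v = 0) (u : V) :
    0 ≤ laplacian d v u * g u := by
  by_cases hu : v = u
  · simp [← hu, hv]
  · exact mul_nonneg (by simp [laplacian, hu]) (hg u)

lemma PeriodVector.eq_zero_of_edge_to {f : V → ℕ} (hf : PeriodVector d f) {u v : V}
    (hv : f v = 0) (huv : d u v ≠ 0) : f u = 0 := by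
  have hnonneg := laplacian_mul_nonneg (d := d) (g := fun w => (f w : ℤ))
    (fun w => Int.natCast_nonneg _) (v := v) (by simp [hv])
  have hterms := (Finset.sum_eq_zero_iff_of_nonneg fun w _ => hnonneg w).1 (congrFun hf v) u
    (Finset.mem_univ u)
  by_cases hu : v = u
  · rwa [← hu]
  · simpa [laplacian, hu, huv] using hterms

lemma Eulerian.sum_sum_compl_eq (heul : Eulerian d) (S : Finset V) :
    ∑ a ∈ S, ∑ b ∈ Sᶜ, d a b = ∑ a ∈ S, ∑ b ∈ Sᶜ, d b a := by
  have h : ∑ a ∈ S, outdeg d a = ∑ a ∈ S, indeg d a := Finset.sum_congr rfl fun a _ => heul a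
  simp only [outdeg, indeg, ← Finset.sum_add_sum_compl S (d _),
    ← Finset.sum_add_sum_compl S (d · _), Finset.sum_add_distrib] at h
  rw [Finset.sum_comm (s := S) (t := S) (f := fun a b => d a b)] at h
  omega

lemma PeriodVector.eq_zero_of_edge_from (heul : Eulerian d) {f : V → ℕ}
    (hf : PeriodVector d f) {u v : V} (hv : f v = 0) (hvu : d v u ≠ 0) : f u = 0 := by
  -- No edge enters the zero set `Z` of `f`, so by the Eulerian balance none leaves it.
  by_contra hu
  set Z := Finset.univ.filter fun w => f w = 0
  have hin : ∑ a ∈ Z, ∑ b ∈ Zᶜ, d b a = 0 :=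
    Finset.sum_eq_zero fun a ha => Finset.sum_eq_zero fun b hb => by
      by_contra hba
      simp only [Z, Finset.mem_compl, Finset.mem_filter, Finset.mem_univ, true_and] at ha hb
      exact hb (hf.eq_zero_of_edge_to ha hba)
  rw [← heul.sum_sum_compl_eq Z, Finset.sum_eq_zero_iff] at hin
  exact hvu (Finset.sum_eq_zero_iff.1 (hin v (by simp [Z, hv])) u (by simp [Z, hu]))

lemma PeriodVector.pos (hconn : WeaklyConnected d) (heul : Eulerian d) {f : V → ℕ}
    (hf : PeriodVector d f) (hne : f ≠ 0) (v : V) : 0 < f v := by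
  refine Nat.pos_of_ne_zero fun hv => hne (funext fun u => ?_)
  induction hconn v u with
  | refl => exact hv
  | tail _ hedge ih =>
    exact hedge.elim (hf.eq_zero_of_edge_from heul ih) (hf.eq_zero_of_edge_to ih)

lemma LinEquiv.exists_nonneg {c y f : V → ℕ} (hf : PeriodVector d f) (hpos : ∀ v, 0 < f v)
    (h : LinEquiv d c y) :
    ∃ w : V → ℤ, 0 ≤ w ∧ ∀ v, (c v : ℤ) = y v + (laplacian d *ᵥ w) v := by
  obtain ⟨z, hz⟩ := h
  set t := ∑ u, |z u|
  refine ⟨z + t • fun v => (f v : ℤ), fun v => ?_, fun v => ?_⟩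
  · have hzt : |z v| ≤ t := Finset.single_le_sum (fun u _ => abs_nonneg (z u)) (Finset.mem_univ v)
    have hfv : (1 : ℤ) ≤ f v := by exact_mod_cast hpos v
    have ht : t ≤ t * f v := le_mul_of_one_le_right ((abs_nonneg _).trans hzt) hfv
    simp only [Pi.zero_apply, Pi.add_apply, Pi.smul_apply, smul_eq_mul]
    linarith [neg_abs_le (z v)]
  · rw [hz v, mulVec_add, mulVec_smul, hf]
    simp

/-- Least action principle: a legal game from `y` that fired `v` for the `(w v + 1)`-st time would
do so with at most `c v < outdeg d v` chips on `v`. -/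
lemma firingVector_le_of_stable {y c : V → ℕ} {w : V → ℤ} (hw : 0 ≤ w)
    (hc : ∀ v, (c v : ℤ) = y v + (laplacian d *ᵥ w) v) (hstable : ∀ v, c v < outdeg d v)
    {α : List V} (hα : LegalSeq d y α) (v : V) : (firingVector α v : ℤ) ≤ w v := by
  induction α using List.reverseRecOn generalizing v with
  | nil => simpa [firingVector] using hw v
  | append_singleton α a ih =>
    obtain ⟨hρ, ha⟩ := legalSeq_concat.1 hα
    rw [firingVector_concat]
    split_ifs with hva
    · subst hva
      refine Int.add_one_le_of_lt (lt_of_le_of_ne (ih hρ v) fun heq => ?_)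
      have hgap : 0 ≤ (laplacian d *ᵥ (w - fun u => (firingVector α u : ℤ))) v :=
        Finset.sum_nonneg fun u _ =>
          laplacian_mul_nonneg (fun u => sub_nonneg.2 (ih hρ u)) (by simp [heq]) u
      rw [mulVec_sub, Pi.sub_apply] at hgap
      have hrun := runGame_cast hρ v
      have hcv := hc v
      have := hstable v
      omega
    · simpa using ih hρ v

theorem exists_le_of_recurrent_of_linEquiv (hconn : WeaklyConnected d) (heul : Eulerian d)
    {c y : V → ℕ} (hy : Recurrent d y) (hcy : LinEquiv d c y) : ∃ v, outdeg d v ≤ c v := by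
  obtain ⟨β, hβ, hleg, hrun⟩ := hy
  have hf := periodVector_firingVector hleg hrun
  have hpos := hf.pos hconn heul (firingVector_ne_zero hβ)
  obtain ⟨w, hw, hcw⟩ := hcy.exists_nonneg hf hpos
  by_contra! hstable
  obtain ⟨v, -⟩ := List.exists_mem_of_ne_nil β hβ
  set n := (w v).toNat + 1
  have hle := firingVector_le_of_stable hw hcw hstable (legalSeq_flatten_replicate hleg hrun n).1 v
  rw [firingVector_flatten_replicate] at hle
  have : (n : ℤ) ≤ n * firingVector β v := by
    exact_mod_cast Nat.le_mul_of_pos_right n (hpos v)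
  have := Int.self_le_toNat (w v)
  push_cast [n] at *
  omega

lemma nonTerminating_of_forall_reaches {x : V → ℕ}
    (H : ∀ c, Reaches d x c → ∃ v, outdeg d v ≤ c v) : NonTerminating d x := by
  choose pick hpick using H
  let state : ℕ → {c // Reaches d x c} := fun n =>
    n.rec ⟨x, Reaches.refl x⟩ fun _ c => ⟨fire d c.1 (pick c.1 c.2), c.2.fire (hpick c.1 c.2)⟩
  let s : ℕ → V := fun n => pick (state n).1 (state n).2
  have key : ∀ n, LegalSeq d x (List.ofFn fun i : Fin n => s i) ∧
      runGame d x (List.ofFn fun i : Fin n => s i) = (state n).1 := by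
    intro n
    induction n with
    | zero => exact ⟨trivial, rfl⟩
    | succ n ih =>
      rw [List.ofFn_succ', List.concat_eq_append, legalSeq_concat, runGame_concat]
      simp only [Fin.val_castSucc, Fin.val_last, ih.2]
      exact ⟨⟨ih.1, hpick _ _⟩, rfl⟩
  exact ⟨s, fun n => (key n).1⟩

theorem nonTerminating_of_linEquiv_recurrent (hconn : WeaklyConnected d) (heul : Eulerian d)
    {x y : V → ℕ} (hy : Recurrent d y) (hxy : LinEquiv d x y) : NonTerminating d x :=
  nonTerminating_of_forall_reaches fun _ hc =>
    exists_le_of_recurrent_of_linEquiv hconn heul hy (hc.linEquiv.trans hxy)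

lemma recurrent_runGame {x : V → ℕ} {α β : List V} (hleg : LegalSeq d x (α ++ β))
    (hβ : β ≠ []) (heq : runGame d x (α ++ β) = runGame d x α) : Recurrent d (runGame d x α) :=
  ⟨β, hβ, (legalSeq_append.1 hleg).2, by rwa [← runGame_append]⟩

theorem exists_recurrent_linEquiv_of_nonTerminating {x : V → ℕ} (hx : NonTerminating d x) :
    ∃ y, Recurrent d y ∧ LinEquiv d x y := by
  obtain ⟨s, hs⟩ := hx
  obtain ⟨m, n, hmn, heq⟩ := Set.Finite.exists_lt_map_eq_of_forall_mem
    (f := fun n => runGame d x (List.ofFn fun i : Fin n => s i))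
    (fun n => Set.mem_univ_pi.2 fun v => runGame_le_sum (hs n) v)
    (Set.Finite.pi fun _ => Set.finite_Iic (∑ u, x u))
  obtain ⟨k, hk, rfl⟩ : ∃ k, 0 < k ∧ n = m + k := ⟨n - m, by omega, by omega⟩
  have hsplit := List.ofFn_add (f := fun i : Fin (m + k) => s i)
  simp only [Fin.val_castLE, Fin.val_natAdd] at hsplit
  have hleg := hs (m + k)
  rw [hsplit] at hleg heq
  refine ⟨_, recurrent_runGame hleg (by simpa using hk.ne') heq.symm, LinEquiv.symm ?_⟩
  exact Reaches.linEquiv ⟨_, (legalSeq_append.1 hleg).1, rfl⟩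

end

theorem nonTerminating_iff_exists_recurrent_linEquiv_general {V : Type*} [Fintype V]
    [DecidableEq V] (d : V → V → ℕ)
    (hconn : WeaklyConnected d) (heul : Eulerian d) (x : V → ℕ) :
    NonTerminating d x ↔ ∃ y : V → ℕ, Recurrent d y ∧ LinEquiv d x y :=
  ⟨exists_recurrent_linEquiv_of_nonTerminating,
    fun ⟨_, hy, hxy⟩ => nonTerminating_of_linEquiv_recurrent hconn heul hy hxy⟩

/-- On a connected Eulerian digraph, a chip-distribution `x` is
non-terminating if and only if there is a recurrent chip-distribution `y` with `x ~ y`. -/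
theorem nonTerminating_iff_exists_recurrent_linEquiv {V : Type*} [Fintype V]
    [DecidableEq V] (d : V → V → ℕ)
    (hloop : Loopless d) (hconn : WeaklyConnected d) (heul : Eulerian d) (x : V → ℕ) :
    NonTerminating d x ↔ ∃ y : V → ℕ, Recurrent d y ∧ LinEquiv d x y :=
  nonTerminating_iff_exists_recurrent_linEquiv_general d hconn heul x

end ChipFiring
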